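/- Let Z be a generalized stabilizable pointed graph and Γ a generalized stabilizable pointed subgraph of Z. Then the quotient Z/Γ, obtained by contracting Γ to a single point, is also a generalized stabilizable pointed graph. -/

import Mathlib

/-!
Write `Z` as a subdivision of a semistable stabilizable `K`. Since `Γ` is GS, every ordinary
vertex of `Γ` has an incoming and an outgoing edge in `Γ`. This property of `(S, F)` pulls back
along subdivisions, and `Z/Γ` is, up to isomorphism, a subdivision of the corresponding quotient
of `K`. Collapsing does not change the degrees of the surviving ordinary vertices, so that
quotient is semistable. It is stabilizable because a stabilization `K → H` descends to the
quotients: contracting an edge of the collapsed part does not change the quotient, any other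
contractible edge stays contractible (an ordinary vertex of `Γ` has edges of `Γ` in both
directions, so an edge outside `Γ` is never its only incoming or outgoing edge), and the quotient
of the stable graph `H` is stable.
-/

open Relation

/-- A pointed finite directed multigraph: a digraph with a distinguished vertex. -/
structure PGraph where
  V : Type
  E : Type
  [hV : Finite V]
  [hE : Finite E]
  src : E → V
  tgt : E → V
  base : V

attribute [instance] PGraph.hV PGraph.hE

namespace PGraph

noncomputable def degOut (G : PGraph) (v : G.V) : ℕ := Nat.card {e : G.E // G.src e = v}
noncomputable def degIn (G : PGraph) (v : G.V) : ℕ := Nat.card {e : G.E // G.tgt e = v}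

/-- Semistability, required only of ordinary (non-distinguished) vertices. -/
def Semistable (G : PGraph) : Prop :=
  ∀ v : G.V, v ≠ G.base → 1 ≤ G.degIn v ∧ 1 ≤ G.degOut v ∧ 3 ≤ G.degIn v + G.degOut v

/-- Stability, required only of ordinary vertices. -/
def Stable (G : PGraph) : Prop :=
  ∀ v : G.V, v ≠ G.base → 2 ≤ G.degIn v ∧ 2 ≤ G.degOut v

/-- An edge `uv` is contractible if `u ≠ v` and either `u` is ordinary with out-degree 1,
or `v` is ordinary with in-degree 1. -/
def Contractible (G : PGraph) (e : G.E) : Prop :=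
  G.src e ≠ G.tgt e ∧
    ((G.src e ≠ G.base ∧ G.degOut (G.src e) = 1) ∨
     (G.tgt e ≠ G.base ∧ G.degIn (G.tgt e) = 1))

def mergeRel (G : PGraph) (e0 : G.E) (a b : G.V) : Prop :=
  a = b ∨ ((a = G.src e0 ∨ a = G.tgt e0) ∧ (b = G.src e0 ∨ b = G.tgt e0))

/-- Contract the edge `e0`, merging its two endpoints. -/
def contract (G : PGraph) (e0 : G.E) : PGraph where
  V := Quot (G.mergeRel e0)
  E := {e : G.E // e ≠ e0}
  src e := Quot.mk _ (G.src e.1)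
  tgt e := Quot.mk _ (G.tgt e.1)
  base := Quot.mk _ G.base

/-- Isomorphism of pointed graphs. -/
structure Iso (G H : PGraph) where
  vEquiv : G.V ≃ H.V
  eEquiv : G.E ≃ H.E
  src_map : ∀ e, H.src (eEquiv e) = vEquiv (G.src e)
  tgt_map : ∀ e, H.tgt (eEquiv e) = vEquiv (G.tgt e)
  base_map : vEquiv G.base = H.base

def Adj (G : PGraph) (a b : G.V) : Prop := ∃ e, G.src e = a ∧ G.tgt e = b

def Strong (G : PGraph) : Prop := ∀ a b : G.V, ReflTransGen G.Adj a b

def ContractStep (G H : PGraph) : Prop :=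
  ∃ e0 : G.E, G.Contractible e0 ∧ Nonempty (Iso (G.contract e0) H)

def IsStabilization (G H : PGraph) : Prop :=
  ReflTransGen ContractStep G H ∧ H.Stable

def Stabilizable (G : PGraph) : Prop := ∃ H, G.IsStabilization H

open Classical in
/-- The determinant det(I − A(Γ₋)), where Γ₋ is the graph on the ordinary vertices. -/
noncomputable def detIAminus (G : PGraph) : ℤ :=
  letI := Fintype.ofFinite {v : G.V // v ≠ G.base}
  ((1 : Matrix {v : G.V // v ≠ G.base} {v : G.V // v ≠ G.base} ℤ) -
    Matrix.of fun a b : {v : G.V // v ≠ G.base} =>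
      (Nat.card {e : G.E // G.src e = a.1 ∧ G.tgt e = b.1} : ℤ)).det

end PGraph

namespace PGraph

open Classical in
/-- Insert a new ordinary vertex of in- and out-degree (1,1) into the edge `e0`. -/
noncomputable def subdivide (G : PGraph) (e0 : G.E) : PGraph where
  V := Option G.V
  hV := Finite.of_equiv _ (Equiv.optionEquivSumPUnit.{0,0} G.V).symm
  E := G.E ⊕ Unit
  src e := match e with
    | Sum.inl e => some (G.src e)
    | Sum.inr _ => none
  tgt e := match e with
    | Sum.inl e => if e = e0 then none else some (G.tgt e)
    | Sum.inr _ => some (G.tgt e0)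
  base := some G.base

def SubdivStep (G H : PGraph) : Prop := ∃ e0 : G.E, Nonempty (Iso (G.subdivide e0) H)

/-- A generalized stabilizable (GS) pointed graph: obtained from a stabilizable
semistable pointed graph by inserting finitely many degree-(1,1) ordinary vertices
into edges. -/
def GenStabilizable (G : PGraph) : Prop :=
  ∃ K : PGraph, K.Semistable ∧ K.Stabilizable ∧ Relation.ReflTransGen SubdivStep K G

/-- The pointed subgraph of `Z` determined by a vertex set `S` containing the base
point and an edge set `F` whose edges have both endpoints in `S`. -/
def subgraph (Z : PGraph) (S : Set Z.V) (F : Set Z.E) (hb : Z.base ∈ S)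
    (hF : ∀ e ∈ F, Z.src e ∈ S ∧ Z.tgt e ∈ S) : PGraph where
  V := S
  E := F
  src e := ⟨Z.src e.1, (hF e.1 e.2).1⟩
  tgt e := ⟨Z.tgt e.1, (hF e.1 e.2).2⟩
  base := ⟨Z.base, hb⟩

def collapseRel (Z : PGraph) (S : Set Z.V) (a b : Z.V) : Prop :=
  a = b ∨ (a ∈ S ∧ b ∈ S)

/-- The quotient pointed graph `Z/Γ` obtained by contracting the subgraph on `(S, F)`
to a single point, which becomes the distinguished vertex. -/
def quotientBy (Z : PGraph) (S : Set Z.V) (F : Set Z.E) : PGraph where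
  V := Quot (Z.collapseRel S)
  E := {e : Z.E // e ∉ F}
  src e := Quot.mk _ (Z.src e.1)
  tgt e := Quot.mk _ (Z.tgt e.1)
  base := Quot.mk _ Z.base

end PGraph

noncomputable def Equiv.ofSameFibers {X A B : Type*} {p : X → A} {q : X → B}
    (hp : p.Surjective) (hq : q.Surjective) (h : ∀ x y, p x = p y ↔ q x = q y) : A ≃ B :=
  Equiv.ofBijective (fun a => q (Function.surjInv hp a))
    ⟨fun a a' haa' => by
        rwa [← h, Function.surjInv_eq hp, Function.surjInv_eq hp] at haa',
      fun b => by
        obtain ⟨x, rfl⟩ := hq b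
        exact ⟨p x, (h _ _).1 (Function.surjInv_eq hp _)⟩⟩

theorem Equiv.ofSameFibers_apply {X A B : Type*} {p : X → A} {q : X → B}
    (hp : p.Surjective) (hq : q.Surjective) (h : ∀ x y, p x = p y ↔ q x = q y) (x : X) :
    Equiv.ofSameFibers hp hq h (p x) = q x :=
  (h _ _).1 (Function.surjInv_eq hp _)

theorem Quot.mk_eq_mk_iff_eq_or_and {α : Type*} (p : α → Prop) {a b : α} :
    Quot.mk (fun x y => x = y ∨ (p x ∧ p y)) a = Quot.mk _ b ↔ a = b ∨ (p a ∧ p b) := by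
  have hr : Equivalence fun x y : α => x = y ∨ (p x ∧ p y) :=
    ⟨fun _ => .inl rfl, fun h => h.elim (.inl ·.symm) (.inr ·.symm),
      fun h h' => h.elim (· ▸ h') fun hxy =>
        h'.elim (· ▸ .inr hxy) fun hyz => .inr ⟨hxy.1, hyz.2⟩⟩
  rw [Quot.eq, hr.eqvGen_iff]

namespace PGraph

def contractMk (G : PGraph) (e : G.E) (v : G.V) : (G.contract e).V := Quot.mk _ v

def quotientByMk (Z : PGraph) (S : Set Z.V) (F : Set Z.E) (v : Z.V) : (Z.quotientBy S F).V :=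
  Quot.mk _ v

section Mk

variable {G : PGraph} {e : G.E} {S : Set G.V} {F : Set G.E}

@[simp] theorem quotientBy_src (f : (G.quotientBy S F).E) :
    (G.quotientBy S F).src f = G.quotientByMk S F (G.src f.1) := rfl

@[simp] theorem quotientBy_tgt (f : (G.quotientBy S F).E) :
    (G.quotientBy S F).tgt f = G.quotientByMk S F (G.tgt f.1) := rfl

@[simp] theorem quotientBy_base : (G.quotientBy S F).base = G.quotientByMk S F G.base := rfl

theorem contractMk_surjective : (G.contractMk e).Surjective := Quot.mk_surjective

theorem quotientByMk_surjective : (G.quotientByMk S F).Surjective := Quot.mk_surjective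

theorem contractMk_eq_iff {a b : G.V} :
    G.contractMk e a = G.contractMk e b ↔
      a = b ∨ ((a = G.src e ∨ a = G.tgt e) ∧ (b = G.src e ∨ b = G.tgt e)) :=
  Quot.mk_eq_mk_iff_eq_or_and fun x => x = G.src e ∨ x = G.tgt e

theorem quotientByMk_eq_iff {a b : G.V} :
    G.quotientByMk S F a = G.quotientByMk S F b ↔ a = b ∨ (a ∈ S ∧ b ∈ S) :=
  Quot.mk_eq_mk_iff_eq_or_and (· ∈ S)

theorem contractMk_src : G.contractMk e (G.src e) = G.contractMk e (G.tgt e) :=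
  Quot.sound (.inr ⟨.inl rfl, .inr rfl⟩)

end Mk

def DegreeCondition (G : PGraph) (P : ℕ → ℕ → Prop) : Prop :=
  ∀ v, v ≠ G.base → P (G.degIn v) (G.degOut v)

namespace Iso

variable {G H K : PGraph}

def refl (G : PGraph) : Iso G G :=
  ⟨Equiv.refl _, Equiv.refl _, fun _ => rfl, fun _ => rfl, rfl⟩

def symm (φ : Iso G H) : Iso H G where
  vEquiv := φ.vEquiv.symm
  eEquiv := φ.eEquiv.symm
  src_map e := by rw [Equiv.eq_symm_apply, ← φ.src_map, Equiv.apply_symm_apply]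
  tgt_map e := by rw [Equiv.eq_symm_apply, ← φ.tgt_map, Equiv.apply_symm_apply]
  base_map := by rw [Equiv.symm_apply_eq, φ.base_map]

def trans (φ : Iso G H) (ψ : Iso H K) : Iso G K where
  vEquiv := φ.vEquiv.trans ψ.vEquiv
  eEquiv := φ.eEquiv.trans ψ.eEquiv
  src_map e := by simp [ψ.src_map, φ.src_map]
  tgt_map e := by simp [ψ.tgt_map, φ.tgt_map]
  base_map := by simp [φ.base_map, ψ.base_map]

theorem degIn_vEquiv (φ : Iso G H) (v : G.V) : H.degIn (φ.vEquiv v) = G.degIn v :=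
  (Nat.card_congr (φ.eEquiv.subtypeEquiv fun e => by
    rw [φ.tgt_map, EmbeddingLike.apply_eq_iff_eq])).symm

theorem degOut_vEquiv (φ : Iso G H) (v : G.V) : H.degOut (φ.vEquiv v) = G.degOut v :=
  (Nat.card_congr (φ.eEquiv.subtypeEquiv fun e => by
    rw [φ.src_map, EmbeddingLike.apply_eq_iff_eq])).symm

theorem vEquiv_eq_base_iff (φ : Iso G H) {v : G.V} : φ.vEquiv v = H.base ↔ v = G.base := by
  rw [← φ.base_map, EmbeddingLike.apply_eq_iff_eq]

theorem degreeCondition (φ : Iso G H) {P : ℕ → ℕ → Prop} (h : G.DegreeCondition P) :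
    H.DegreeCondition P := by
  intro v hv
  obtain ⟨u, rfl⟩ := φ.vEquiv.surjective v
  rw [φ.degIn_vEquiv, φ.degOut_vEquiv]
  exact h u (mt φ.vEquiv_eq_base_iff.2 hv)

theorem stable (φ : Iso G H) (h : G.Stable) : H.Stable :=
  φ.degreeCondition (P := fun i o => 2 ≤ i ∧ 2 ≤ o) h

theorem semistable (φ : Iso G H) (h : G.Semistable) : H.Semistable :=
  φ.degreeCondition (P := fun i o => 1 ≤ i ∧ 1 ≤ o ∧ 3 ≤ i + o) h

theorem contractible (φ : Iso G H) {e : G.E} (h : G.Contractible e) :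
    H.Contractible (φ.eEquiv e) := by
  simpa only [Contractible, φ.src_map, φ.tgt_map, ne_eq, EmbeddingLike.apply_eq_iff_eq,
    φ.vEquiv_eq_base_iff, φ.degIn_vEquiv, φ.degOut_vEquiv] using h

def contract (φ : Iso G H) (e : G.E) : Iso (G.contract e) (H.contract (φ.eEquiv e)) where
  vEquiv := Quot.congr φ.vEquiv fun a b => by
    simp only [mergeRel, φ.src_map, φ.tgt_map, EmbeddingLike.apply_eq_iff_eq]
  eEquiv := φ.eEquiv.subtypeEquiv fun e' => by simp
  src_map e' := congrArg (Quot.mk _) (φ.src_map e'.1)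
  tgt_map e' := congrArg (Quot.mk _) (φ.tgt_map e'.1)
  base_map := congrArg (Quot.mk _) φ.base_map

def quotientBy (φ : Iso G H) (S : Set G.V) (F : Set G.E) :
    Iso (G.quotientBy S F) (H.quotientBy (φ.vEquiv.symm ⁻¹' S) (φ.eEquiv.symm ⁻¹' F)) where
  vEquiv := Quot.congr φ.vEquiv fun a b => by
    simp only [collapseRel, Set.mem_preimage, Equiv.symm_apply_apply,
      EmbeddingLike.apply_eq_iff_eq]
  eEquiv := φ.eEquiv.subtypeEquiv fun e => by simp
  src_map e := congrArg (Quot.mk _) (φ.src_map e.1)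
  tgt_map e := congrArg (Quot.mk _) (φ.tgt_map e.1)
  base_map := congrArg (Quot.mk _) φ.base_map

end Iso

theorem ContractStep.of_iso {A B C : PGraph} (φ : Iso A B) (h : ContractStep A C) :
    ContractStep B C := by
  obtain ⟨e, he, ⟨ψ⟩⟩ := h
  exact ⟨φ.eEquiv e, φ.contractible he, ⟨(φ.contract e).symm.trans ψ⟩⟩

theorem ContractStep.iso_right {A B C : PGraph} (h : ContractStep A B) (ψ : Iso B C) :
    ContractStep A C := by
  obtain ⟨e, he, ⟨χ⟩⟩ := h
  exact ⟨e, he, ⟨χ.trans ψ⟩⟩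

theorem SubdivStep.iso_right {A B C : PGraph} (h : SubdivStep A B) (ψ : Iso B C) :
    SubdivStep A C := by
  obtain ⟨e, ⟨χ⟩⟩ := h
  exact ⟨e, ⟨χ.trans ψ⟩⟩

theorem Stabilizable.of_iso {A B : PGraph} (φ : Iso A B) (h : A.Stabilizable) :
    B.Stabilizable := by
  obtain ⟨H, hAH, hH⟩ := h
  rcases hAH.cases_head with rfl | ⟨C, hAC, hCH⟩
  · exact ⟨B, .refl, φ.stable hH⟩
  · exact ⟨H, .head (hAC.of_iso φ) hCH, hH⟩

section QuotientBy

variable {Z : PGraph} {S : Set Z.V} {F : Set Z.E}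

theorem degIn_quotientByMk (hF : ∀ e ∈ F, Z.tgt e ∈ S) {v : Z.V} (hv : v ∉ S) :
    (Z.quotientBy S F).degIn (Z.quotientByMk S F v) = Z.degIn v :=
  Nat.card_congr <| (Equiv.subtypeSubtypeEquivSubtypeInter (· ∉ F)
    fun e => Z.quotientByMk S F (Z.tgt e) = Z.quotientByMk S F v).trans <|
    Equiv.subtypeEquivRight fun e => by
      rw [quotientByMk_eq_iff]
      exact ⟨fun h => h.2.resolve_right fun h' => hv h'.2,
        fun h => ⟨fun he => hv (h ▸ hF e he), .inl h⟩⟩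

theorem degOut_quotientByMk (hF : ∀ e ∈ F, Z.src e ∈ S) {v : Z.V} (hv : v ∉ S) :
    (Z.quotientBy S F).degOut (Z.quotientByMk S F v) = Z.degOut v :=
  Nat.card_congr <| (Equiv.subtypeSubtypeEquivSubtypeInter (· ∉ F)
    fun e => Z.quotientByMk S F (Z.src e) = Z.quotientByMk S F v).trans <|
    Equiv.subtypeEquivRight fun e => by
      rw [quotientByMk_eq_iff]
      exact ⟨fun h => h.2.resolve_right fun h' => hv h'.2,
        fun h => ⟨fun he => hv (h ▸ hF e he), .inl h⟩⟩

theorem quotientByMk_eq_base_iff (hb : Z.base ∈ S) {v : Z.V} :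
    Z.quotientByMk S F v = (Z.quotientBy S F).base ↔ v ∈ S := by
  rw [quotientBy_base, quotientByMk_eq_iff]
  exact ⟨fun h => h.elim (· ▸ hb) And.left, fun h => .inr ⟨h, hb⟩⟩

theorem DegreeCondition.quotientBy {P : ℕ → ℕ → Prop} (h : Z.DegreeCondition P)
    (hb : Z.base ∈ S) (hsrc : ∀ e ∈ F, Z.src e ∈ S) (htgt : ∀ e ∈ F, Z.tgt e ∈ S) :
    (Z.quotientBy S F).DegreeCondition P := by
  intro x hx
  obtain ⟨v, rfl⟩ := quotientByMk_surjective x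
  have hv : v ∉ S := mt (quotientByMk_eq_base_iff hb).2 hx
  rw [degIn_quotientByMk htgt hv, degOut_quotientByMk hsrc hv]
  exact h v fun hvb => hv (hvb ▸ hb)

end QuotientBy

/-- As in a GS subgraph, every ordinary vertex of the subgraph on `(S, F)` has an incoming and
an outgoing edge in `F`; this keeps an edge outside `F` contractible after collapsing `(S, F)`. -/
structure Admissible (Z : PGraph) (S : Set Z.V) (F : Set Z.E) : Prop where
  base_mem : Z.base ∈ S
  src_mem : ∀ e ∈ F, Z.src e ∈ S
  tgt_mem : ∀ e ∈ F, Z.tgt e ∈ S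
  exists_tgt_eq : ∀ v ∈ S, v ≠ Z.base → ∃ e ∈ F, Z.tgt e = v
  exists_src_eq : ∀ v ∈ S, v ≠ Z.base → ∃ e ∈ F, Z.src e = v

namespace Admissible

variable {Z : PGraph} {S : Set Z.V} {F : Set Z.E}

theorem quotientBy_stable (h : Z.Admissible S F) (hZ : Z.Stable) :
    (Z.quotientBy S F).Stable :=
  DegreeCondition.quotientBy (P := fun i o => 2 ≤ i ∧ 2 ≤ o) hZ h.base_mem h.src_mem h.tgt_mem

theorem quotientBy_semistable (h : Z.Admissible S F) (hZ : Z.Semistable) :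
    (Z.quotientBy S F).Semistable :=
  DegreeCondition.quotientBy (P := fun i o => 1 ≤ i ∧ 1 ≤ o ∧ 3 ≤ i + o) hZ
    h.base_mem h.src_mem h.tgt_mem

theorem of_iso {G H : PGraph} {S : Set G.V} {F : Set G.E} (h : G.Admissible S F)
    (φ : Iso G H) : H.Admissible (φ.vEquiv.symm ⁻¹' S) (φ.eEquiv.symm ⁻¹' F) := by
  refine ⟨?_, fun e he => ?_, fun e he => ?_, fun v hv hvb => ?_, fun v hv hvb => ?_⟩
  · simpa [← φ.base_map] using h.base_mem
  · obtain ⟨e, rfl⟩ := φ.eEquiv.surjective e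
    simpa [φ.src_map] using h.src_mem e (by simpa using he)
  · obtain ⟨e, rfl⟩ := φ.eEquiv.surjective e
    simpa [φ.tgt_map] using h.tgt_mem e (by simpa using he)
  · obtain ⟨v, rfl⟩ := φ.vEquiv.surjective v
    obtain ⟨e, he, rfl⟩ :=
      h.exists_tgt_eq v (by simpa using hv) (mt φ.vEquiv_eq_base_iff.2 hvb)
    exact ⟨φ.eEquiv e, by simpa using he, φ.tgt_map e⟩
  · obtain ⟨v, rfl⟩ := φ.vEquiv.surjective v
    obtain ⟨e, he, rfl⟩ :=
      h.exists_src_eq v (by simpa using hv) (mt φ.vEquiv_eq_base_iff.2 hvb)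
    exact ⟨φ.eEquiv e, by simpa using he, φ.src_map e⟩

theorem src_notMem (h : Z.Admissible S F) {e : Z.E} (he : e ∉ F) (hb : Z.src e ≠ Z.base)
    (hd : Z.degOut (Z.src e) = 1) : Z.src e ∉ S := fun hs => by
  obtain ⟨f, hf, hfe⟩ := h.exists_src_eq _ hs hb
  have : (⟨f, hfe⟩ : {f // Z.src f = Z.src e}) = ⟨e, rfl⟩ :=
    (Nat.card_eq_one_iff_unique.1 hd).1.elim _ _
  obtain rfl : f = e := congrArg Subtype.val this
  exact he hf

theorem tgt_notMem (h : Z.Admissible S F) {e : Z.E} (he : e ∉ F) (hb : Z.tgt e ≠ Z.base)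
    (hd : Z.degIn (Z.tgt e) = 1) : Z.tgt e ∉ S := fun ht => by
  obtain ⟨f, hf, hfe⟩ := h.exists_tgt_eq _ ht hb
  have : (⟨f, hfe⟩ : {f // Z.tgt f = Z.tgt e}) = ⟨e, rfl⟩ :=
    (Nat.card_eq_one_iff_unique.1 hd).1.elim _ _
  obtain rfl : f = e := congrArg Subtype.val this
  exact he hf

theorem contractible_quotientBy (h : Z.Admissible S F) {e : (Z.quotientBy S F).E}
    (hc : Z.Contractible e.1) : (Z.quotientBy S F).Contractible e := by
  obtain ⟨hne, hsrc | htgt⟩ := hc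
  · have hs := h.src_notMem e.2 hsrc.1 hsrc.2
    refine ⟨fun hst => ?_, .inl ⟨mt (quotientByMk_eq_base_iff h.base_mem).1 hs, ?_⟩⟩
    · exact hne ((quotientByMk_eq_iff.1 hst).resolve_right fun h' => hs h'.1)
    · exact (degOut_quotientByMk h.src_mem hs).trans hsrc.2
  · have ht := h.tgt_notMem e.2 htgt.1 htgt.2
    refine ⟨fun hst => ?_, .inr ⟨mt (quotientByMk_eq_base_iff h.base_mem).1 ht, ?_⟩⟩
    · exact hne ((quotientByMk_eq_iff.1 hst).resolve_right fun h' => ht h'.2)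
    · exact (degIn_quotientByMk h.tgt_mem ht).trans htgt.2

end Admissible

theorem contractMk_mem_image_iff {G : PGraph} {e : G.E} {S : Set G.V} {a : G.V} :
    G.contractMk e a ∈ G.contractMk e '' S ↔
      a ∈ S ∨ ((a = G.src e ∨ a = G.tgt e) ∧ (G.src e ∈ S ∨ G.tgt e ∈ S)) := by
  simp only [Set.mem_image, contractMk_eq_iff]
  grind

section Contract

variable {L : PGraph} {S : Set L.V} {F : Set L.E} {e : L.E}

theorem Admissible.contract (h : L.Admissible S F) (hne : L.src e ≠ L.tgt e) :
    (L.contract e).Admissible (L.contractMk e '' S) (Subtype.val ⁻¹' F) := by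
  have hb : ∀ a, L.contractMk e a ≠ (L.contract e).base → a ≠ L.base :=
    fun a ha hab => ha (hab ▸ rfl)
  refine ⟨⟨L.base, h.base_mem, rfl⟩, fun f hf => ⟨_, h.src_mem _ hf, rfl⟩,
    fun f hf => ⟨_, h.tgt_mem _ hf, rfl⟩, ?_, ?_⟩
  · rintro _ ⟨a, ha, rfl⟩ hab
    obtain ⟨f, hf, rfl⟩ := h.exists_tgt_eq a ha (hb _ hab)
    by_cases hfe : f = e
    · -- `a = tgt e` is merged with `src e`, whose incoming edge in `F` is not `e`
      subst hfe
      obtain ⟨f', hf', hf't⟩ :=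
        h.exists_tgt_eq _ (h.src_mem f hf) (hb _ (contractMk_src ▸ hab))
      exact ⟨⟨f', fun h' => hne (h' ▸ hf't).symm⟩, hf',
        (congrArg _ hf't).trans contractMk_src⟩
    · exact ⟨⟨f, hfe⟩, hf, rfl⟩
  · rintro _ ⟨a, ha, rfl⟩ hab
    obtain ⟨f, hf, rfl⟩ := h.exists_src_eq a ha (hb _ hab)
    by_cases hfe : f = e
    · subst hfe
      obtain ⟨f', hf', hf's⟩ :=
        h.exists_src_eq _ (h.tgt_mem f hf) (hb _ (contractMk_src.symm ▸ hab))
      exact ⟨⟨f', fun h' => hne (h' ▸ hf's)⟩, hf',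
        (congrArg _ hf's).trans contractMk_src.symm⟩
    · exact ⟨⟨f, hfe⟩, hf, rfl⟩

noncomputable def quotientByIsoQuotientByContract (hs : L.src e ∈ S) (ht : L.tgt e ∈ S)
    (he : e ∈ F) :
    Iso (L.quotientBy S F)
      ((L.contract e).quotientBy (L.contractMk e '' S) (Subtype.val ⁻¹' F)) where
  vEquiv := Equiv.ofSameFibers (p := L.quotientByMk S F)
    (q := fun a => (L.contract e).quotientByMk _ _ (L.contractMk e a))
    quotientByMk_surjective (quotientByMk_surjective.comp contractMk_surjective) fun a b => by
      simp only [quotientByMk_eq_iff, contractMk_eq_iff, contractMk_mem_image_iff]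
      grind
  eEquiv := (Equiv.subtypeSubtypeEquivSubtype (p := (· ≠ e)) (q := (· ∉ F))
    fun hf hfe => hf (hfe ▸ he)).symm
  src_map f := Eq.symm <| Equiv.ofSameFibers_apply _ _ _ _
  tgt_map f := Eq.symm <| Equiv.ofSameFibers_apply _ _ _ _
  base_map := Equiv.ofSameFibers_apply _ _ _ _

noncomputable def contractQuotientByIsoQuotientByContract (e' : (L.quotientBy S F).E) :
    Iso ((L.quotientBy S F).contract e')
      ((L.contract e'.1).quotientBy (L.contractMk e'.1 '' S) (Subtype.val ⁻¹' F)) where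
  vEquiv := Equiv.ofSameFibers
    (p := fun a => (L.quotientBy S F).contractMk e' (L.quotientByMk S F a))
    (q := fun a => (L.contract e'.1).quotientByMk _ _ (L.contractMk e'.1 a))
    (contractMk_surjective.comp quotientByMk_surjective)
    (quotientByMk_surjective.comp contractMk_surjective) fun a b => by
      -- on both sides `a ~ b` iff `a = b`, or both lie in `S`, or both are ends of `e`, or
      -- they are linked through an end of `e` lying in `S`
      simp only [quotientByMk_eq_iff, contractMk_eq_iff, contractMk_mem_image_iff,
        quotientBy_src, quotientBy_tgt]
      grind
  eEquiv :=
    { toFun := fun f => ⟨⟨f.1.1, fun h => f.2 (Subtype.ext h)⟩, f.1.2⟩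
      invFun := fun f => ⟨⟨f.1.1, f.2⟩, fun h => f.1.2 (congrArg Subtype.val h)⟩ }
  src_map f := Eq.symm <| Equiv.ofSameFibers_apply _ _ _ _
  tgt_map f := Eq.symm <| Equiv.ofSameFibers_apply _ _ _ _
  base_map := Equiv.ofSameFibers_apply _ _ _ _

end Contract

namespace Admissible

theorem exists_iso_or_contractStep {L L' : PGraph} {S : Set L.V} {F : Set L.E}
    (h : L.Admissible S F) (hLL' : ContractStep L L') :
    ∃ (S' : Set L'.V) (F' : Set L'.E), L'.Admissible S' F' ∧
      (Nonempty (Iso (L.quotientBy S F) (L'.quotientBy S' F')) ∨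
        ContractStep (L.quotientBy S F) (L'.quotientBy S' F')) := by
  obtain ⟨e, hc, ⟨ψ⟩⟩ := hLL'
  refine ⟨_, _, (h.contract hc.1).of_iso ψ, ?_⟩
  by_cases he : e ∈ F
  · exact .inl ⟨(quotientByIsoQuotientByContract (h.src_mem e he) (h.tgt_mem e he) he).trans
      (ψ.quotientBy _ _)⟩
  · exact .inr ⟨⟨e, he⟩, h.contractible_quotientBy hc,
      ⟨(contractQuotientByIsoQuotientByContract ⟨e, he⟩).trans (ψ.quotientBy _ _)⟩⟩

theorem exists_contractChain {K H : PGraph} {S : Set K.V} {F : Set K.E}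
    (h : K.Admissible S F) (hKH : ReflTransGen ContractStep K H) :
    ∃ (S' : Set H.V) (F' : Set H.E), H.Admissible S' F' ∧
      ∃ M, ReflTransGen ContractStep (K.quotientBy S F) M ∧
        Nonempty (Iso (H.quotientBy S' F') M) := by
  induction hKH with
  | refl => exact ⟨S, F, h, _, .refl, ⟨.refl _⟩⟩
  | tail _ hLL' ih =>
    obtain ⟨S₁, F₁, h₁, M, hM, ⟨χ⟩⟩ := ih
    obtain ⟨S₂, F₂, h₂, hiso | hstep⟩ := h₁.exists_iso_or_contractStep hLL'
    · obtain ⟨ι⟩ := hiso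
      exact ⟨S₂, F₂, h₂, M, hM, ⟨ι.symm.trans χ⟩⟩
    · exact ⟨S₂, F₂, h₂, _, hM.tail (hstep.of_iso χ), ⟨.refl _⟩⟩

theorem quotientBy_stabilizable {K : PGraph} {S : Set K.V} {F : Set K.E}
    (h : K.Admissible S F) (hK : K.Stabilizable) : (K.quotientBy S F).Stabilizable := by
  obtain ⟨H, hKH, hH⟩ := hK
  obtain ⟨S', F', h', M, hM, ⟨χ⟩⟩ := h.exists_contractChain hKH
  exact ⟨M, hM, χ.stable (h'.quotientBy_stable hH)⟩

end Admissible

section Subdivide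

variable {W : PGraph} {e₀ : W.E}

@[simp] theorem subdivide_src_inr (u : Unit) : (W.subdivide e₀).src (.inr u) = none := rfl

@[simp] theorem subdivide_tgt_inl_self : (W.subdivide e₀).tgt (.inl e₀) = none := if_pos rfl

theorem subdivide_tgt_inl_of_ne {e : W.E} (h : e ≠ e₀) :
    (W.subdivide e₀).tgt (.inl e) = some (W.tgt e) :=
  if_neg h

theorem subdivide_tgt_eq_none_iff {f : (W.subdivide e₀).E} :
    (W.subdivide e₀).tgt f = none ↔ f = .inl e₀ := by
  rcases f with e | u
  · by_cases h : e = e₀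
    · subst h
      exact iff_of_true subdivide_tgt_inl_self rfl
    · rw [subdivide_tgt_inl_of_ne h]
      exact iff_of_false (Option.some_ne_none _) fun h' => h (Sum.inl_injective h')
  · exact iff_of_false (Option.some_ne_none _) Sum.inr_ne_inl

theorem subdivide_src_eq_none_iff {f : (W.subdivide e₀).E} :
    (W.subdivide e₀).src f = none ↔ f = .inr () := by
  rcases f with e | ⟨⟩
  · exact iff_of_false (Option.some_ne_none _) Sum.inl_ne_inr
  · exact iff_of_true rfl rfl

variable {S : Set (W.subdivide e₀).V} {F : Set (W.subdivide e₀).E}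

theorem Admissible.subdivide_mem_of_none_mem (h : (W.subdivide e₀).Admissible S F)
    (hnone : none ∈ S) : Sum.inl e₀ ∈ F ∧ Sum.inr () ∈ F := by
  obtain ⟨f, hf, hft⟩ := h.exists_tgt_eq none hnone nofun
  obtain ⟨f', hf', hf's⟩ := h.exists_src_eq none hnone nofun
  exact ⟨subdivide_tgt_eq_none_iff.1 hft ▸ hf, subdivide_src_eq_none_iff.1 hf's ▸ hf'⟩

theorem Admissible.of_subdivide (h : (W.subdivide e₀).Admissible S F) :
    W.Admissible (some ⁻¹' S) (Sum.inl ⁻¹' F) where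
  base_mem := h.base_mem
  src_mem e he := h.src_mem _ he
  tgt_mem e he := by
    by_cases hee : e = e₀
    · subst hee
      have hnone : none ∈ S := subdivide_tgt_inl_self ▸ h.tgt_mem _ he
      exact h.tgt_mem _ (h.subdivide_mem_of_none_mem hnone).2
    · have := h.tgt_mem _ he
      rwa [subdivide_tgt_inl_of_ne hee] at this
  exists_tgt_eq v hv hvb := by
    obtain ⟨e | u, hf, hft⟩ := h.exists_tgt_eq (some v) hv (hvb ∘ Option.some.inj)
    · by_cases hee : e = e₀
      · simp [hee] at hft
      · exact ⟨e, hf, Option.some.inj (subdivide_tgt_inl_of_ne hee ▸ hft)⟩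
    · exact ⟨e₀, (h.subdivide_mem_of_none_mem (h.src_mem _ hf)).1, Option.some.inj hft⟩
  exists_src_eq v hv hvb := by
    obtain ⟨e | u, hf, hfs⟩ := h.exists_src_eq (some v) hv (hvb ∘ Option.some.inj)
    · exact ⟨e, hf, Option.some.inj hfs⟩
    · simp at hfs

theorem quotientByMk_some_eq_iff {a b : W.V} :
    (W.subdivide e₀).quotientByMk S F (some a) = (W.subdivide e₀).quotientByMk S F (some b) ↔
      W.quotientByMk (some ⁻¹' S) (Sum.inl ⁻¹' F) a = W.quotientByMk _ _ b :=
  (quotientByMk_eq_iff (G := W.subdivide e₀)).trans <|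
    (or_congr_left Option.some_inj).trans
      (quotientByMk_eq_iff (S := some ⁻¹' S) (F := Sum.inl ⁻¹' F)).symm

noncomputable def quotientByIsoQuotientBySubdivide (h : (W.subdivide e₀).Admissible S F)
    (hnone : none ∈ S) :
    Iso (W.quotientBy (some ⁻¹' S) (Sum.inl ⁻¹' F)) ((W.subdivide e₀).quotientBy S F) where
  vEquiv := Equiv.ofSameFibers (p := W.quotientByMk _ _)
    (q := fun v => (W.subdivide e₀).quotientByMk S F (some v)) quotientByMk_surjective
    (fun x => by
      obtain ⟨_ | v, rfl⟩ := quotientByMk_surjective x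
      · exact ⟨W.base, quotientByMk_eq_iff.2 (.inr ⟨h.base_mem, hnone⟩)⟩
      · exact ⟨v, rfl⟩)
    fun _ _ => quotientByMk_some_eq_iff.symm
  eEquiv := Equiv.ofBijective (fun f => ⟨.inl f.1, f.2⟩)
    ⟨fun f f' hff' => Subtype.ext (Sum.inl_injective (congrArg Subtype.val hff')), by
      rintro ⟨e | ⟨⟩, hf⟩
      · exact ⟨⟨e, hf⟩, rfl⟩
      · exact absurd (h.subdivide_mem_of_none_mem hnone).2 hf⟩
  src_map f := Eq.symm <| Equiv.ofSameFibers_apply _ _ _ _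
  tgt_map f := by
    have hne : f.1 ≠ e₀ := fun hf => f.2 (hf ▸ (h.subdivide_mem_of_none_mem hnone).1)
    exact (congrArg _ (subdivide_tgt_inl_of_ne hne)).trans <|
      Eq.symm <| Equiv.ofSameFibers_apply _ _ _ _
  base_map := Equiv.ofSameFibers_apply _ _ _ _

noncomputable def subdivideQuotientByIsoQuotientBySubdivide (hnone : none ∉ S)
    (hinr : Sum.inr () ∉ F) (he₀ : e₀ ∉ Sum.inl ⁻¹' F) :
    Iso ((W.quotientBy (some ⁻¹' S) (Sum.inl ⁻¹' F)).subdivide ⟨e₀, he₀⟩)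
      ((W.subdivide e₀).quotientBy S F) where
  vEquiv := Equiv.ofSameFibers (p := Option.map (W.quotientByMk (some ⁻¹' S) (Sum.inl ⁻¹' F)))
    (q := (W.subdivide e₀).quotientByMk S F)
    (by
      rintro (_ | x)
      · exact ⟨none, rfl⟩
      · obtain ⟨v, rfl⟩ := quotientByMk_surjective x
        exact ⟨some v, rfl⟩)
    quotientByMk_surjective fun
      | none, none => iff_of_true rfl rfl
      | none, some b => iff_of_false nofun fun h =>
          (quotientByMk_eq_iff.1 h).elim nofun fun h' => hnone h'.1
      | some a, none => iff_of_false nofun fun h =>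
          (quotientByMk_eq_iff.1 h).elim nofun fun h' => hnone h'.2
      | some a, some b => Option.some_inj.trans quotientByMk_some_eq_iff.symm
  eEquiv := Equiv.ofBijective (Sum.elim (fun f => ⟨.inl f.1, f.2⟩) fun _ => ⟨.inr (), hinr⟩)
    ⟨by
      rintro (⟨f, hf⟩ | ⟨⟩) (⟨f', hf'⟩ | ⟨⟩) hff'
      · obtain rfl : f = f' := Sum.inl_injective (congrArg Subtype.val hff')
        rfl
      · exact absurd (congrArg Subtype.val hff') Sum.inl_ne_inr
      · exact absurd (congrArg Subtype.val hff') Sum.inr_ne_inl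
      · rfl, by
      rintro ⟨e | ⟨⟩, hf⟩
      · exact ⟨.inl ⟨e, hf⟩, rfl⟩
      · exact ⟨.inr (), rfl⟩⟩
  src_map
    | .inl f => Eq.symm <| Equiv.ofSameFibers_apply _ _ _ (some (W.src f.1))
    | .inr () => Eq.symm <| Equiv.ofSameFibers_apply _ _ _ none
  tgt_map
    | .inl ⟨e, he⟩ => by
      by_cases hee : e = e₀
      · subst e
        calc _ = (W.subdivide e₀).quotientByMk S F none := congrArg _ subdivide_tgt_inl_self
          _ = _ := (Equiv.ofSameFibers_apply _ _ _ none).symm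
          _ = _ := congrArg _ (if_pos rfl).symm
      · calc _ = (W.subdivide e₀).quotientByMk S F (some (W.tgt e)) :=
              congrArg _ (subdivide_tgt_inl_of_ne hee)
          _ = _ := (Equiv.ofSameFibers_apply _ _ _ (some (W.tgt e))).symm
          _ = _ := congrArg _ (if_neg fun h => hee (congrArg Subtype.val h)).symm
    | .inr () => Eq.symm <| Equiv.ofSameFibers_apply _ _ _ (some (W.tgt e₀))
  base_map := Equiv.ofSameFibers_apply _ _ _ (some W.base)

theorem Admissible.quotientBy_iso_or_subdivStep (h : (W.subdivide e₀).Admissible S F) :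
    Nonempty (Iso (W.quotientBy (some ⁻¹' S) (Sum.inl ⁻¹' F))
        ((W.subdivide e₀).quotientBy S F)) ∨
      SubdivStep (W.quotientBy (some ⁻¹' S) (Sum.inl ⁻¹' F))
        ((W.subdivide e₀).quotientBy S F) := by
  by_cases hnone : none ∈ S
  · exact .inl ⟨quotientByIsoQuotientBySubdivide h hnone⟩
  · have hinl : Sum.inl e₀ ∉ F := fun hf => hnone (subdivide_tgt_inl_self ▸ h.tgt_mem _ hf)
    have hinr : Sum.inr () ∉ F := fun hf => hnone (h.src_mem _ hf)
    exact .inr ⟨⟨e₀, hinl⟩,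
      ⟨subdivideQuotientByIsoQuotientBySubdivide hnone hinr hinl⟩⟩

end Subdivide

theorem Admissible.exists_subdivChain {K Z : PGraph} {S : Set Z.V} {F : Set Z.E}
    (h : Z.Admissible S F) (hKZ : ReflTransGen SubdivStep K Z) :
    ∃ (S' : Set K.V) (F' : Set K.E), K.Admissible S' F' ∧
      ∃ Q, Nonempty (Iso (K.quotientBy S' F') Q) ∧
        ReflTransGen SubdivStep Q (Z.quotientBy S F) := by
  induction hKZ using ReflTransGen.head_induction_on with
  | refl => exact ⟨S, F, h, _, ⟨.refl _⟩, .refl⟩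
  | head hKK₁ _ ih =>
    obtain ⟨S₁, F₁, h₁, Q, ⟨χ⟩, hQ⟩ := ih
    obtain ⟨e₀, ⟨ψ⟩⟩ := hKK₁
    have h₂ := h₁.of_iso ψ.symm
    have ι := ψ.symm.quotientBy S₁ F₁
    rcases h₂.quotientBy_iso_or_subdivStep with hiso | hstep
    · obtain ⟨κ⟩ := hiso
      exact ⟨_, _, h₂.of_subdivide, Q, ⟨(κ.trans ι.symm).trans χ⟩, hQ⟩
    · exact ⟨_, _, h₂.of_subdivide, _, ⟨.refl _⟩,
        .head (hstep.iso_right (ι.symm.trans χ)) hQ⟩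

def HasInOutEdges (G : PGraph) : Prop :=
  ∀ v, v ≠ G.base → (∃ e, G.tgt e = v) ∧ ∃ e, G.src e = v

theorem Semistable.hasInOutEdges {G : PGraph} (h : G.Semistable) : G.HasInOutEdges :=
  fun v hv => ⟨(Nat.card_pos_iff.1 (h v hv).1).1.elim fun e => ⟨e.1, e.2⟩,
    (Nat.card_pos_iff.1 (h v hv).2.1).1.elim fun e => ⟨e.1, e.2⟩⟩

theorem HasInOutEdges.of_iso {G H : PGraph} (h : G.HasInOutEdges) (φ : Iso G H) :
    H.HasInOutEdges := by
  intro v hv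
  obtain ⟨v, rfl⟩ := φ.vEquiv.surjective v
  obtain ⟨⟨e, he⟩, ⟨e', he'⟩⟩ := h v (mt φ.vEquiv_eq_base_iff.2 hv)
  exact ⟨⟨φ.eEquiv e, he ▸ φ.tgt_map e⟩, ⟨φ.eEquiv e', he' ▸ φ.src_map e'⟩⟩

theorem HasInOutEdges.subdivide {W : PGraph} (h : W.HasInOutEdges) (e₀ : W.E) :
    (W.subdivide e₀).HasInOutEdges := by
  rintro (_ | v) hv
  · exact ⟨⟨.inl e₀, subdivide_tgt_inl_self⟩, ⟨.inr (), rfl⟩⟩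
  · obtain ⟨⟨e, he⟩, ⟨e', he'⟩⟩ := h v fun hvb => hv (congrArg some hvb)
    refine ⟨?_, ⟨.inl e', congrArg some he'⟩⟩
    by_cases hee : e = e₀
    · exact ⟨.inr (), congrArg some (hee ▸ he)⟩
    · exact ⟨.inl e, (subdivide_tgt_inl_of_ne hee).trans (congrArg some he)⟩

theorem GenStabilizable.hasInOutEdges {G : PGraph} (h : G.GenStabilizable) :
    G.HasInOutEdges := by
  obtain ⟨K, hK, -, hKG⟩ := h
  induction hKG with
  | refl => exact hK.hasInOutEdges
  | tail _ hstep ih =>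
    obtain ⟨e₀, ⟨ψ⟩⟩ := hstep
    exact (ih.subdivide e₀).of_iso ψ

theorem admissible_of_hasInOutEdges_subgraph {Z : PGraph} {S : Set Z.V} {F : Set Z.E}
    {hb : Z.base ∈ S} {hF : ∀ e ∈ F, Z.src e ∈ S ∧ Z.tgt e ∈ S}
    (h : (Z.subgraph S F hb hF).HasInOutEdges) : Z.Admissible S F where
  base_mem := hb
  src_mem e he := (hF e he).1
  tgt_mem e he := (hF e he).2
  exists_tgt_eq v hv hvb := by
    obtain ⟨⟨e, he⟩, -⟩ := h ⟨v, hv⟩ fun h' => hvb (congrArg Subtype.val h')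
    exact ⟨e.1, e.2, congrArg Subtype.val he⟩
  exists_src_eq v hv hvb := by
    obtain ⟨-, ⟨e, he⟩⟩ := h ⟨v, hv⟩ fun h' => hvb (congrArg Subtype.val h')
    exact ⟨e.1, e.2, congrArg Subtype.val he⟩

end PGraph

/-- If `Z` is a GS pointed graph and `Γ` (the pointed subgraph of `Z` on
`(S, F)`) is GS, then the quotient `Z/Γ` is also a GS pointed graph. -/
theorem quotient_genStabilizable (Z : PGraph) (S : Set Z.V) (F : Set Z.E)
    (hb : Z.base ∈ S) (hF : ∀ e ∈ F, Z.src e ∈ S ∧ Z.tgt e ∈ S)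
    (hZ : Z.GenStabilizable) (hΓ : (Z.subgraph S F hb hF).GenStabilizable) :
    (Z.quotientBy S F).GenStabilizable := by
  obtain ⟨K, hKss, hKst, hKZ⟩ := hZ
  have hSF := PGraph.admissible_of_hasInOutEdges_subgraph hΓ.hasInOutEdges
  obtain ⟨S', F', hK, Q, ⟨χ⟩, hQ⟩ := hSF.exists_subdivChain hKZ
  exact ⟨Q, χ.semistable (hK.quotientBy_semistable hKss),
    (hK.quotientBy_stabilizable hKst).of_iso χ, hQ⟩
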